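/- arXiv:1407.3286 — 2 statements merged into one kernel-verified Lean document; each statement's English description precedes it below -/
import Mathlib

section
/- Let k ∈ ℕ, let A be an algorithm and let Ã = 𝔉_DaS(A) be its Delay-a-Step transformation. Suppose R̃ = ⟨F̃, H̃, Ĩ, Φ̃, T̃⟩ is a valid run of Ã using 𝒫_{k+1}. Define the initial configuration I of A by I|_i = delay_i(Ĩ|_i) for every process p_i; for each p_i let no-op(i) be the index of the first step of p_i in Φ̃, and obtain Φ and T' from Φ̃ and T̃ by deleting, for each p_i, the entries at index no-op(i). Then R' = ⟨F̃, H̃, I, Φ, T'⟩ is a valid run of A using 𝒫_{k+1}. -/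
namespace FDT

open Classical

/-- A failure pattern: a monotone assignment of crashed sets to times. -/
structure FailurePattern (Proc : Type) where
  F : ℕ → Set Proc
  mono : ∀ t, F t ⊆ F (t + 1)

variable {Proc State Msg PState : Type}

/-- The set of processes live at time `t`. -/
def live (F : FailurePattern Proc) (t : ℕ) : Set Proc := (F.F t)ᶜ

/-- The set of correct processes: those that are always live. -/
def correctS (F : FailurePattern Proc) : Set Proc := {p | ∀ t, p ∉ F.F t}

/-- The set of faulty processes. -/
def faultyS (F : FailurePattern Proc) : Set Proc := (correctS F)ᶜ

/-- Marabout failure detector: every live process always sees exactly the faulty set. -/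
def Marabout (F : FailurePattern Proc) : Set (Proc → ℕ → Set Proc) :=
  {H | ∀ t : ℕ, ∀ p ∉ F.F t, H p t = faultyS F}

/-- The perfect failure detector: strong completeness and strong accuracy. -/
def Perfect (F : FailurePattern Proc) : Set (Proc → ℕ → Set Proc) :=
  {H | (∀ q ∈ faultyS F, ∀ p ∈ correctS F, ∃ t', ∀ t > t', q ∈ H p t) ∧
       (∀ t : ℕ, ∀ p ∉ F.F t, ∀ q, q ∉ F.F t → q ∉ H p t)}

/-- The failure detector `𝒫_k`: k-completeness and k-accuracy. -/
def Pk (k : ℕ) (F : FailurePattern Proc) : Set (Proc → ℕ → Set Proc) :=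
  {H | (∀ p q : Proc, q ∉ F.F k → q ∈ faultyS F → p ∈ correctS F →
          ∃ t', ∀ t > t', q ∈ H p t) ∧
       (∀ (p q : Proc) (t : ℕ), q ∉ F.F k → q ∉ F.F t → q ∉ H p t)}

/-- `F` is an initial crash scenario: all faulty processes crash at time 0. -/
def IsInitialCrashScenario (F : FailurePattern Proc) : Prop :=
  ∀ t, F.F t = faultyS F

/-- The initial crash scenario `F⁰` associated with `F`. -/
def initialScenario (F : FailurePattern Proc) : FailurePattern Proc :=
  ⟨fun _ => faultyS F, fun _ => subset_rfl⟩

/-- The shifted failure pattern `t ↦ F(t+1)`. -/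
def shiftPattern (F : FailurePattern Proc) : FailurePattern Proc :=
  ⟨fun t => F.F (t + 1), fun t => F.mono (t + 1)⟩

/-- A step `(p, s, m, d, s', m')` of process `p`. -/
structure Step (Proc State Msg : Type) where
  proc : Proc
  st : State
  recv : Option (Proc × Msg)
  fd : Set Proc
  st' : State
  send : Option (Proc × Msg)

/-- An algorithm: state sets, nonempty initial state sets, and a deterministic
transition relation given as the set of allowed steps. -/
structure Algorithm (Proc State Msg : Type) where
  Q : Proc → Set State
  init : Proc → Set State
  init_sub : ∀ p, init p ⊆ Q p
  init_nonempty : ∀ p, (init p).Nonempty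
  allowed : Set (Step Proc State Msg)
  allowed_st : ∀ s ∈ allowed, s.st ∈ Q s.proc ∧ s.st' ∈ Q s.proc
  det : ∀ s ∈ allowed, ∀ s' ∈ allowed,
    s.proc = s'.proc → s.st = s'.st → s.recv = s'.recv → s.fd = s'.fd →
    s.st' = s'.st' ∧ s.send = s'.send

/-- `R = ⟨F, H, I, Φ, T⟩` is a valid run of algorithm `A` using failure detector `D`. -/
def ValidRun (A : Algorithm Proc State Msg)
    (D : FailurePattern Proc → Set (Proc → ℕ → Set Proc))
    (F : FailurePattern Proc) (H : Proc → ℕ → Set Proc) (I : Proc → State)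
    (Φ : ℕ → Step Proc State Msg) (T : ℕ → ℕ) : Prop :=
  -- the time sequence is strictly increasing
  StrictMono T ∧
  -- the history belongs to the detector
  H ∈ D F ∧
  -- the initial configuration is made of initial states
  (∀ p, I p ∈ A.init p) ∧
  -- correct processes take infinitely many steps
  (∀ p ∈ correctS F, ∀ n : ℕ, ∃ ℓ ≥ n, (Φ ℓ).proc = p) ∧
  -- all steps are allowed by the algorithm
  (∀ ℓ, Φ ℓ ∈ A.allowed) ∧
  -- a process taking a step is live at that time
  (∀ ℓ, (Φ ℓ).proc ∉ F.F (T ℓ)) ∧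
  -- the failure detector output is the history value at that time
  (∀ ℓ, (Φ ℓ).fd = H (Φ ℓ).proc (T ℓ)) ∧
  -- no spurious messages
  (∀ ℓ q m, (Φ ℓ).recv = some (q, m) →
     ∃ k < ℓ, (Φ k).proc = q ∧ (Φ k).send = some ((Φ ℓ).proc, m)) ∧
  -- reliable links: each sent message received at most once; exactly once at correct processes
  (∀ ℓ q m, (Φ ℓ).send = some (q, m) →
     (∀ k k', ℓ < k → ℓ < k' → (Φ k).proc = q → (Φ k).recv = some ((Φ ℓ).proc, m) →
        (Φ k').proc = q → (Φ k').recv = some ((Φ ℓ).proc, m) → k = k') ∧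
     (q ∈ correctS F → ∃ k > ℓ, (Φ k).proc = q ∧ (Φ k).recv = some ((Φ ℓ).proc, m))) ∧
  -- the first step of a process starts in its initial state
  (∀ ℓ, (∀ k < ℓ, (Φ k).proc ≠ (Φ ℓ).proc) → (Φ ℓ).st = I (Φ ℓ).proc) ∧
  -- the state does not change between consecutive steps of a process
  (∀ ℓ k, ℓ < k → (Φ k).proc = (Φ ℓ).proc →
     (∀ j, ℓ < j → j < k → (Φ j).proc ≠ (Φ ℓ).proc) → (Φ k).st = (Φ ℓ).st')

/-- `γ(I,Φ,ℓ)`: the configuration (process states) after the first `ℓ` steps of `Φ`. -/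
noncomputable def configAt (I : Proc → State) (Φ : ℕ → Step Proc State Msg) :
    ℕ → Proc → State
  | 0 => I
  | (ℓ + 1) => fun p =>
      if (Φ ℓ).proc = p then (Φ ℓ).st' else configAt I Φ ℓ p

/-- `γ_i(I,Φ,ℓ)`: the state of process `p` after its first `ℓ` own steps in `Φ`
(constant once `p` takes no more steps). -/
noncomputable def procStateAfter (I : Proc → State) (Φ : ℕ → Step Proc State Msg)
    (p : Proc) : ℕ → State
  | 0 => I p
  | (ℓ + 1) =>
      if h : ∃ k, (Φ k).proc = p ∧ {j | j < k ∧ (Φ j).proc = p}.ncard = ℓ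
      then (Φ h.choose).st'
      else procStateAfter I Φ p ℓ

/-- `Φ, T` are obtained from `Φt, Tt` by deleting exactly the entries whose
process lies in `bad`. -/
def IsDeletion (bad : Set Proc) (Φt : ℕ → Step Proc State Msg) (Tt : ℕ → ℕ)
    (Φ : ℕ → Step Proc State Msg) (T : ℕ → ℕ) : Prop :=
  ∃ e : ℕ → ℕ, StrictMono e ∧
    (∀ ℓ, (Φt (e ℓ)).proc ∉ bad) ∧
    (∀ n, (Φt n).proc ∉ bad → ∃ ℓ, e ℓ = n) ∧
    (∀ ℓ, Φ ℓ = Φt (e ℓ)) ∧ (∀ ℓ, T ℓ = Tt (e ℓ))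

/-- Index `n` is the first step of its process in schedule `Φ`. -/
def IsFirstStep (Φ : ℕ → Step Proc State Msg) (n : ℕ) : Prop :=
  ∀ j < n, (Φ j).proc ≠ (Φ n).proc

/-- `Φ, T` are obtained from `Φt, Tt` by deleting, for each process, the entry of its
first step. -/
def IsFirstStepDeletion (Φt : ℕ → Step Proc State Msg) (Tt : ℕ → ℕ)
    (Φ : ℕ → Step Proc State Msg) (T : ℕ → ℕ) : Prop :=
  ∃ e : ℕ → ℕ, StrictMono e ∧
    (∀ ℓ, ¬ IsFirstStep Φt (e ℓ)) ∧
    (∀ n, ¬ IsFirstStep Φt n → ∃ ℓ, e ℓ = n) ∧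
    (∀ ℓ, Φ ℓ = Φt (e ℓ)) ∧ (∀ ℓ, T ℓ = Tt (e ℓ))

/-- Data for the Stall-on-Suspect transformation of `A`: the fresh stall states
`S†_i` (disjoint from `Q_i`) together with the bijections `stall_i : Q̂_i → S†_i`. -/
structure SoSData (A : Algorithm Proc State Msg) where
  Sd : Proc → Set State
  disj : ∀ p, Disjoint (Sd p) (A.Q p)
  stall : Proc → State → State
  stall_maps : ∀ p, ∀ q ∈ A.init p, stall p q ∈ Sd p
  stall_inj : ∀ p, Set.InjOn (stall p) (A.init p)
  stall_surj : ∀ p, Sd p ⊆ stall p '' (A.init p)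

/-- The Stall-on-Suspect transformation `Ã = 𝔉_SoS(A)`. -/
def SoSAlg (A : Algorithm Proc State Msg) (D : SoSData A) :
    Algorithm Proc State Msg where
  Q p := A.Q p ∪ D.Sd p
  init := A.init
  init_sub p := (A.init_sub p).trans Set.subset_union_left
  init_nonempty := A.init_nonempty
  allowed := {s | (s ∈ A.allowed ∧ ¬(s.st ∈ A.init s.proc ∧ s.proc ∈ s.fd)) ∨
      (s.st ∈ A.init s.proc ∧ s.proc ∈ s.fd ∧ s.st' = D.stall s.proc s.st ∧
        s.recv = none ∧ s.send = none) ∨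
      (s.st ∈ D.Sd s.proc ∧ s.st' = s.st ∧ s.recv = none ∧ s.send = none)}
  allowed_st := by
    rintro s (⟨hA, -⟩ | ⟨h1, h2, h3, -⟩ | ⟨h1, h2, -⟩)
    · exact ⟨Set.mem_union_left _ (A.allowed_st s hA).1,
        Set.mem_union_left _ (A.allowed_st s hA).2⟩
    · exact ⟨Set.mem_union_left _ (A.init_sub _ h1),
        Set.mem_union_right _ (h3 ▸ D.stall_maps _ _ h1)⟩
    · exact ⟨Set.mem_union_right _ h1, Set.mem_union_right _ (h2 ▸ h1)⟩
  det := by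
    rintro s hs s' hs' hproc hst hrecv hfd
    rcases hs with ⟨hA, hn⟩ | ⟨h1, h2, h3, h4, h5⟩ | ⟨h1, h2, h3, h4⟩ <;>
      rcases hs' with ⟨hA', hn'⟩ | ⟨h1', h2', h3', h4', h5'⟩ | ⟨h1', h2', h3', h4'⟩
    · exact A.det s hA s' hA' hproc hst hrecv hfd
    · exact absurd ⟨by rw [hproc, hst]; exact h1', by rw [hproc, hfd]; exact h2'⟩ hn
    · exact absurd ((A.allowed_st s hA).1)
        (Set.disjoint_left.mp (D.disj s.proc) (by rw [hproc, hst]; exact h1'))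
    · exact absurd ⟨by rw [← hproc, ← hst]; exact h1, by rw [← hproc, ← hfd]; exact h2⟩ hn'
    · refine ⟨?_, by rw [h5, h5']⟩
      rw [h3, h3', hproc, hst]
    · exact absurd (A.init_sub _ h1)
        (Set.disjoint_left.mp (D.disj s.proc) (by rw [hproc, hst]; exact h1'))
    · exact absurd ((A.allowed_st s' hA').1)
        (Set.disjoint_left.mp (D.disj s'.proc) (by rw [← hproc, ← hst]; exact h1))
    · exact absurd (A.init_sub _ h1')
        (Set.disjoint_left.mp (D.disj s'.proc) (by rw [← hproc, ← hst]; exact h1))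
    · exact ⟨by rw [h2, h2', hst], by rw [h4, h4']⟩

/-- Data for the Delay-a-Step transformation of `A`: fresh initial states `S⋆_i`
(disjoint from `Q_i`) together with the bijections `delay_i : S⋆_i → Q̂_i`. -/
structure DaSData (A : Algorithm Proc State Msg) where
  Ss : Proc → Set State
  disj : ∀ p, Disjoint (Ss p) (A.Q p)
  delay : Proc → State → State
  delay_maps : ∀ p, ∀ s ∈ Ss p, delay p s ∈ A.init p
  delay_inj : ∀ p, Set.InjOn (delay p) (Ss p)
  delay_surj : ∀ p, A.init p ⊆ delay p '' (Ss p)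

/-- The Delay-a-Step transformation `Ã = 𝔉_DaS(A)`. -/
def DaSAlg (A : Algorithm Proc State Msg) (D : DaSData A) :
    Algorithm Proc State Msg where
  Q p := A.Q p ∪ D.Ss p
  init p := D.Ss p
  init_sub p := Set.subset_union_right
  init_nonempty p := by
    obtain ⟨q, hq⟩ := A.init_nonempty p
    obtain ⟨s, hs, -⟩ := D.delay_surj p hq
    exact ⟨s, hs⟩
  allowed := {s | s ∈ A.allowed ∨
      (s.st ∈ D.Ss s.proc ∧ s.st' = D.delay s.proc s.st ∧
        s.recv = none ∧ s.send = none)}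
  allowed_st := by
    rintro s (hA | ⟨h1, h2, -⟩)
    · exact ⟨Set.mem_union_left _ (A.allowed_st s hA).1,
        Set.mem_union_left _ (A.allowed_st s hA).2⟩
    · exact ⟨Set.mem_union_right _ h1,
        Set.mem_union_left _ (A.init_sub _ (h2 ▸ D.delay_maps _ _ h1))⟩
  det := by
    rintro s hs s' hs' hproc hst hrecv hfd
    rcases hs with hA | ⟨h1, h2, h3, h4⟩ <;> rcases hs' with hA' | ⟨h1', h2', h3', h4'⟩
    · exact A.det s hA s' hA' hproc hst hrecv hfd
    · exact absurd ((A.allowed_st s hA).1)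
        (Set.disjoint_left.mp (D.disj s.proc) (by rw [hproc, hst]; exact h1'))
    · exact absurd ((A.allowed_st s' hA').1)
        (Set.disjoint_left.mp (D.disj s'.proc) (by rw [← hproc, ← hst]; exact h1))
    · exact ⟨by rw [h2, h2', hproc, hst], by rw [h4, h4']⟩

/-- One stuttering insertion: `w'` is obtained from `w` by inserting between the
`n`-th and `(n+1)`-st configurations a configuration agreeing componentwise with
one of the two. -/
def Stutter1 (w w' : ℕ → Proc → PState) : Prop :=
  ∃ n : ℕ, (∀ k ≤ n, w' k = w k) ∧
    (∀ p, w' (n + 1) p = w n p ∨ w' (n + 1) p = w (n + 1) p) ∧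
    (∀ k, n < k → w' (k + 1) = w k)

/-- `w ⊑ w'`: `w'` is obtained from `w` by finitely many stuttering insertions. -/
def Stutter (w w' : ℕ → Proc → PState) : Prop :=
  Relation.ReflTransGen Stutter1 w w'

/-- A time-free problem: a predicate on problem-configuration sequences and
failure patterns, satisfying crash time independence and finite stuttering. -/
structure TimeFreeProblem (Proc PState : Type) (initP : Set PState) where
  pred : (ℕ → Proc → PState) → FailurePattern Proc → Prop
  crashIndep : ∀ (w : ℕ → Proc → PState) (F F' : FailurePattern Proc),
    (∀ p, w 0 p ∈ initP) → correctS F = correctS F' → (pred w F ↔ pred w F')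
  stutterInv : ∀ (w w' : ℕ → Proc → PState) (F : FailurePattern Proc),
    (∀ p, w 0 p ∈ initP) → Stutter w w' → (pred w F ↔ pred w' F)

/-- `V` is an interpretation of the states of `A`: each `V_i` maps `Q_i` onto the
problem states, and `Q̂_i` onto the initial problem states `initP`. -/
def IsInterp (A : Algorithm Proc State Msg) (initP : Set PState)
    (V : Proc → State → PState) : Prop :=
  (∀ p, V p '' A.Q p = Set.univ) ∧ (∀ p, V p '' A.init p = initP)

/-- The interpreted run of a run with initial configuration `I` and schedule `Φ`. -/
noncomputable def interpRun (V : Proc → State → PState) (I : Proc → State)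
    (Φ : ℕ → Step Proc State Msg) : ℕ → Proc → PState :=
  fun ℓ p => V p (configAt I Φ ℓ p)

/-- Algorithm `A` solves problem `P` using failure detector `D`. -/
noncomputable def Solves (A : Algorithm Proc State Msg)
    (D : FailurePattern Proc → Set (Proc → ℕ → Set Proc))
    (P : (ℕ → Proc → PState) → FailurePattern Proc → Prop)
    (initP : Set PState) : Prop :=
  ∃ V : Proc → State → PState, IsInterp A initP V ∧
    ∀ (F : FailurePattern Proc) (H : Proc → ℕ → Set Proc) (I : Proc → State)
      (Φ : ℕ → Step Proc State Msg) (T : ℕ → ℕ),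
      ValidRun A D F H I Φ T → P (interpRun V I Φ) F

/-- Problem `P` is solvable using failure detector `D`. -/
noncomputable def SolvableWith (Proc : Type) {PState : Type}
    (D : FailurePattern Proc → Set (Proc → ℕ → Set Proc))
    (P : (ℕ → Proc → PState) → FailurePattern Proc → Prop)
    (initP : Set PState) : Prop :=
  ∃ (State Msg : Type) (A : Algorithm Proc State Msg), Solves A D P initP

/-- Problem states of strong consensus: an input value in `{0,1}` and a decision
in `{⊥,0,1}`. -/
abbrev SCState : Type := Bool × Option Bool

/-- Initial problem states of strong consensus: no decision yet. -/
def SCinit : Set SCState := {s | s.2 = none}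

/-- The strong-consensus predicate: inputs never change, decisions change at most
once and only from `⊥`, and all correct processes eventually forever decide the
input value of a single correct process (when a correct process exists). -/
def SCpred (w : ℕ → Proc → SCState) (F : FailurePattern Proc) : Prop :=
  (∀ (p : Proc) (ℓ : ℕ), (w ℓ p).1 = (w 0 p).1) ∧
  (∀ (p : Proc) (ℓ : ℕ), (w ℓ p).2 ≠ none → (w (ℓ + 1) p).2 = (w ℓ p).2) ∧
  ((correctS F).Nonempty →
    ∃ j ∈ correctS F, ∀ i ∈ correctS F, ∃ N, ∀ ℓ ≥ N, (w ℓ i).2 = some (w 0 j).1)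

/-! The no-op first steps of a run of `Ã` send and receive nothing, so deleting them
loses no message; the first state of each process in the shortened schedule is the state
`delay_i(Ĩ|_i) = I|_i` that its deleted no-op step produced; and since every later state
lies in `Q_i`, which is disjoint from the fresh states `S⋆_i`, every remaining step is a
step of `A`. -/

section Schedule

-- Clauses of `ValidRun`, stated separately; each unfolds to the clause verbatim.
def TakesInfinitelyManySteps (Φ : ℕ → Step Proc State Msg) (p : Proc) : Prop :=
  ∀ n, ∃ ℓ ≥ n, (Φ ℓ).proc = p

def NoSpuriousMessages (Φ : ℕ → Step Proc State Msg) : Prop :=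
  ∀ ℓ q m, (Φ ℓ).recv = some (q, m) →
    ∃ k < ℓ, (Φ k).proc = q ∧ (Φ k).send = some ((Φ ℓ).proc, m)

def ReliableLinks (F : FailurePattern Proc) (Φ : ℕ → Step Proc State Msg) : Prop :=
  ∀ ℓ q m, (Φ ℓ).send = some (q, m) →
    (∀ k k', ℓ < k → ℓ < k' → (Φ k).proc = q → (Φ k).recv = some ((Φ ℓ).proc, m) →
      (Φ k').proc = q → (Φ k').recv = some ((Φ ℓ).proc, m) → k = k') ∧
    (q ∈ correctS F → ∃ k > ℓ, (Φ k).proc = q ∧ (Φ k).recv = some ((Φ ℓ).proc, m))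

def FirstStepsStartIn (I : Proc → State) (Φ : ℕ → Step Proc State Msg) : Prop :=
  ∀ ℓ, IsFirstStep Φ ℓ → (Φ ℓ).st = I (Φ ℓ).proc

def StatesChained (Φ : ℕ → Step Proc State Msg) : Prop :=
  ∀ ℓ k, ℓ < k → (Φ k).proc = (Φ ℓ).proc →
    (∀ j, ℓ < j → j < k → (Φ j).proc ≠ (Φ ℓ).proc) → (Φ k).st = (Φ ℓ).st'

variable {Φ : ℕ → Step Proc State Msg} {e : ℕ → ℕ}

lemma not_isFirstStep_of_lt {j n : ℕ} (hjn : j < n) (hproc : (Φ j).proc = (Φ n).proc) :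
    ¬ IsFirstStep Φ n :=
  fun h => h j hjn hproc

lemma exists_isFirstStep_le (n : ℕ) :
    ∃ j ≤ n, IsFirstStep Φ j ∧ (Φ j).proc = (Φ n).proc := by
  have hex : ∃ j, (Φ j).proc = (Φ n).proc := ⟨n, rfl⟩
  exact ⟨Nat.find hex, Nat.find_min' hex rfl,
    fun i hi hproc => Nat.find_min hex hi (hproc.trans (Nat.find_spec hex)),
    Nat.find_spec hex⟩

lemma StatesChained.exists_prev_st'_eq (hchain : StatesChained Φ) {n : ℕ}
    (hn : ¬ IsFirstStep Φ n) :
    ∃ j < n, (Φ j).proc = (Φ n).proc ∧ (Φ n).st = (Φ j).st' := by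
  obtain ⟨j₀, hj₀n, hj₀⟩ : ∃ j < n, (Φ j).proc = (Φ n).proc := by
    simpa [IsFirstStep] using hn
  set P : ℕ → Prop := fun j => (Φ j).proc = (Φ n).proc
  set j := Nat.findGreatest P (n - 1)
  have hjP : P j := Nat.findGreatest_spec (m := j₀) (by omega) hj₀
  have hjn : j < n := (Nat.findGreatest_le (n - 1)).trans_lt (by omega)
  refine ⟨j, hjn, hjP, hchain j n hjn hjP.symm fun i hji hin hi => ?_⟩
  exact Nat.findGreatest_is_greatest hji (by omega) (hi.trans hjP)

lemma TakesInfinitelyManySteps.comp {p : Proc} (h : TakesInfinitelyManySteps Φ p)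
    (he : StrictMono e) (hsurj : ∀ n, ¬ IsFirstStep Φ n → ∃ ℓ, e ℓ = n) :
    TakesInfinitelyManySteps (Φ ∘ e) p := by
  intro n
  obtain ⟨m₁, hm₁, hp₁⟩ := h (e n)
  obtain ⟨m₂, hm₂, hp₂⟩ := h (m₁ + 1)
  obtain ⟨ℓ, rfl⟩ := hsurj m₂ (not_isFirstStep_of_lt (by omega) (hp₁.trans hp₂.symm))
  exact ⟨ℓ, (he.lt_iff_lt.mp (by omega)).le, hp₂⟩

lemma NoSpuriousMessages.comp (h : NoSpuriousMessages Φ) (he : StrictMono e)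
    (hsurj : ∀ n, ¬ IsFirstStep Φ n → ∃ ℓ, e ℓ = n)
    (hsend : ∀ n, IsFirstStep Φ n → (Φ n).send = none) :
    NoSpuriousMessages (Φ ∘ e) := by
  intro ℓ q m hrecv
  obtain ⟨j, hjℓ, hjq, hjsend⟩ := h (e ℓ) q m hrecv
  obtain ⟨ℓ', rfl⟩ := hsurj j fun hj => by simp [hsend j hj] at hjsend
  exact ⟨ℓ', he.lt_iff_lt.mp hjℓ, hjq, hjsend⟩

lemma ReliableLinks.comp {F : FailurePattern Proc} (h : ReliableLinks F Φ)
    (he : StrictMono e) (hsurj : ∀ n, ¬ IsFirstStep Φ n → ∃ ℓ, e ℓ = n)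
    (hrecv : ∀ n, IsFirstStep Φ n → (Φ n).recv = none) :
    ReliableLinks F (Φ ∘ e) := by
  intro ℓ q m hsend
  obtain ⟨hunique, hdelivered⟩ := h (e ℓ) q m hsend
  refine ⟨fun k k' hk hk' => ?_, fun hq => ?_⟩
  · exact fun hkq hkrecv hk'q hk'recv =>
      he.injective (hunique _ _ (he hk) (he hk') hkq hkrecv hk'q hk'recv)
  · obtain ⟨j, hℓj, hjq, hjrecv⟩ := hdelivered hq
    obtain ⟨ℓ', rfl⟩ := hsurj j fun hj => by simp [hrecv j hj] at hjrecv
    exact ⟨ℓ', he.lt_iff_lt.mp hℓj, hjq, hjrecv⟩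

lemma StatesChained.comp (h : StatesChained Φ) (he : StrictMono e)
    (hsurj : ∀ n, ¬ IsFirstStep Φ n → ∃ ℓ, e ℓ = n) :
    StatesChained (Φ ∘ e) := by
  intro ℓ k hℓk hproc hbetween
  refine h (e ℓ) (e k) (he hℓk) hproc fun i hℓi hik hi => ?_
  obtain ⟨j, rfl⟩ := hsurj i (not_isFirstStep_of_lt hℓi hi.symm)
  exact hbetween j (he.lt_iff_lt.mp hℓi) (he.lt_iff_lt.mp hik) hi

lemma StatesChained.firstStepsStartIn_comp {I : Proc → State} (h : StatesChained Φ)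
    (he : StrictMono e) (hsurj : ∀ n, ¬ IsFirstStep Φ n → ∃ ℓ, e ℓ = n)
    (hne : ∀ ℓ, ¬ IsFirstStep Φ (e ℓ))
    (hfirst : ∀ n, IsFirstStep Φ n → (Φ n).st' = I (Φ n).proc) :
    FirstStepsStartIn I (Φ ∘ e) := by
  intro ℓ hℓ
  obtain ⟨j, hjℓ, hj, hjproc⟩ := exists_isFirstStep_le (Φ := Φ) (e ℓ)
  have hjℓ : j < e ℓ := hjℓ.lt_of_ne fun hjeq => hne ℓ (hjeq ▸ hj)
  have hbetween : ∀ i, j < i → i < e ℓ → (Φ i).proc ≠ (Φ j).proc := by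
    intro i hji hiℓ hi
    obtain ⟨ℓ', rfl⟩ := hsurj i (not_isFirstStep_of_lt hji hi.symm)
    exact hℓ ℓ' (he.lt_iff_lt.mp hiℓ) (hi.trans hjproc)
  simp only [Function.comp_apply]
  rw [h j (e ℓ) hjℓ hjproc.symm hbetween, hfirst j hj, hjproc]

end Schedule

namespace DaSData

variable {A : Algorithm Proc State Msg}

def IsDelayStep (D : DaSData A) (s : Step Proc State Msg) : Prop :=
  s.st ∈ D.Ss s.proc ∧ s.st' = D.delay s.proc s.st ∧ s.recv = none ∧ s.send = none

variable {D : DaSData A} {s : Step Proc State Msg}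

lemma st'_mem_Q (hs : s ∈ (DaSAlg A D).allowed) : s.st' ∈ A.Q s.proc := by
  rcases hs with hA | ⟨hSs, hst', -⟩
  · exact (A.allowed_st s hA).2
  · exact hst' ▸ A.init_sub _ (D.delay_maps _ _ hSs)

lemma mem_allowed_of_st_mem_Q (hs : s ∈ (DaSAlg A D).allowed) (hQ : s.st ∈ A.Q s.proc) :
    s ∈ A.allowed := by
  rcases hs with hA | ⟨hSs, -⟩
  · exact hA
  · exact absurd hQ (Set.disjoint_left.mp (D.disj _) hSs)

lemma isDelayStep_of_st_mem_Ss (hs : s ∈ (DaSAlg A D).allowed) (hSs : s.st ∈ D.Ss s.proc) :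
    D.IsDelayStep s := by
  rcases hs with hA | hdelay
  · exact absurd (A.allowed_st s hA).1 (Set.disjoint_left.mp (D.disj _) hSs)
  · exact hdelay

end DaSData

namespace ValidRun

variable {A : Algorithm Proc State Msg} {D : DaSData A}
  {𝒟 : FailurePattern Proc → Set (Proc → ℕ → Set Proc)} {F : FailurePattern Proc}
  {H : Proc → ℕ → Set Proc} {It : Proc → State} {Φ : ℕ → Step Proc State Msg} {T : ℕ → ℕ}

lemma isDelayStep_of_isFirstStep (hrun : ValidRun (DaSAlg A D) 𝒟 F H It Φ T) {n : ℕ}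
    (hn : IsFirstStep Φ n) : D.IsDelayStep (Φ n) ∧ (Φ n).st = It (Φ n).proc := by
  obtain ⟨-, -, hinit, -, hallowed, -, -, -, -, hfirst, -⟩ := hrun
  have hst := hfirst n hn
  exact ⟨DaSData.isDelayStep_of_st_mem_Ss (hallowed n) (hst ▸ hinit _), hst⟩

lemma mem_allowed_of_not_isFirstStep (hrun : ValidRun (DaSAlg A D) 𝒟 F H It Φ T) {n : ℕ}
    (hn : ¬ IsFirstStep Φ n) : Φ n ∈ A.allowed := by
  obtain ⟨-, -, -, -, hallowed, -, -, -, -, -, hchain⟩ := hrun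
  obtain ⟨j, -, hjproc, hst⟩ := StatesChained.exists_prev_st'_eq hchain hn
  refine DaSData.mem_allowed_of_st_mem_Q (hallowed n) ?_
  rw [hst, ← hjproc]
  exact DaSData.st'_mem_Q (hallowed j)

end ValidRun

theorem delay_a_step_run_valid_general {Proc State Msg : Type} (k : ℕ)
    (A : Algorithm Proc State Msg) (D : DaSData A)
    (Ft : FailurePattern Proc) (Ht : Proc → ℕ → Set Proc) (It : Proc → State)
    (Φt : ℕ → Step Proc State Msg) (Tt : ℕ → ℕ)
    (hrun : ValidRun (DaSAlg A D) (Pk (k + 1)) Ft Ht It Φt Tt)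
    (I : Proc → State) (hI : ∀ p, I p = D.delay p (It p))
    (Φ : ℕ → Step Proc State Msg) (T' : ℕ → ℕ)
    (hdel : IsFirstStepDeletion Φt Tt Φ T') :
    ValidRun A (Pk (k + 1)) Ft Ht I Φ T' := by
  obtain ⟨e, he, hne, hsurj, hΦ, hT'⟩ := hdel
  obtain rfl : Φ = Φt ∘ e := funext hΦ
  obtain rfl : T' = Tt ∘ e := funext hT'
  have hdelay : ∀ n, IsFirstStep Φt n → D.IsDelayStep (Φt n) ∧ (Φt n).st = It (Φt n).proc :=
    fun n hn => hrun.isDelayStep_of_isFirstStep hn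
  have hallowed : ∀ ℓ, Φt (e ℓ) ∈ A.allowed :=
    fun ℓ => hrun.mem_allowed_of_not_isFirstStep (hne ℓ)
  obtain ⟨hT, hH, hinit, hinf, -, hlive, hfd, hspurious, hreliable, -, hchain⟩ := hrun
  have hstart : ∀ n, IsFirstStep Φt n → (Φt n).st' = I (Φt n).proc := fun n hn => by
    rw [(hdelay n hn).1.2.1, (hdelay n hn).2, hI]
  exact ⟨hT.comp he, hH, fun p => hI p ▸ D.delay_maps p _ (hinit p),
    fun p hp => TakesInfinitelyManySteps.comp (hinf p hp) he hsurj, hallowed,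
    fun ℓ => hlive (e ℓ), fun ℓ => hfd (e ℓ),
    NoSpuriousMessages.comp hspurious he hsurj fun n hn => (hdelay n hn).1.2.2.2,
    ReliableLinks.comp hreliable he hsurj fun n hn => (hdelay n hn).1.2.2.1,
    StatesChained.firstStepsStartIn_comp hchain he hsurj hne hstart,
    StatesChained.comp hchain he hsurj⟩

/-- If `R̃ = ⟨F̃,H̃,Ĩ,Φ̃,T̃⟩` is a valid run of `Ã = 𝔉_DaS(A)` using
`𝒫_{k+1}`, `I` is defined by `I|_i = delay_i(Ĩ|_i)`, and `Φ, T'` are obtained from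
`Φ̃, T̃` by deleting for each process the entry of its first (no-op) step, then
`R' = ⟨F̃,H̃,I,Φ,T'⟩` is a valid run of `A` using `𝒫_{k+1}`. -/
theorem delay_a_step_run_valid {Proc State Msg : Type} [Fintype Proc] [Nonempty Proc] (k : ℕ)
    (A : Algorithm Proc State Msg) (D : DaSData A)
    (Ft : FailurePattern Proc) (Ht : Proc → ℕ → Set Proc) (It : Proc → State)
    (Φt : ℕ → Step Proc State Msg) (Tt : ℕ → ℕ)
    (hrun : ValidRun (DaSAlg A D) (Pk (k + 1)) Ft Ht It Φt Tt)
    (I : Proc → State) (hI : ∀ p, I p = D.delay p (It p))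
    (Φ : ℕ → Step Proc State Msg) (T' : ℕ → ℕ)
    (hdel : IsFirstStepDeletion Φt Tt Φ T') :
    ValidRun A (Pk (k + 1)) Ft Ht I Φ T' :=
  delay_a_step_run_valid_general k A D Ft Ht It Φt Tt hrun I hI Φ T' hdel

end FDT
end

section
/- Let k ∈ ℕ. If an algorithm A solves a time-free problem P using the failure detector 𝒫_k, then the algorithm Ã = 𝔉_DaS(A) obtained by the Delay-a-Step transformation solves P using the failure detector 𝒫_{k+1}. -/
namespace FDT

open Classical

variable {Proc State Msg PState : Type}

/-! In a run of `𝔉_DaS(A)` the first step of each process is the silent move `s ↦ delay s`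
out of `S⋆`, and every later step is a step of `A`. Deleting these finitely many first steps
and shifting time back by one unit gives a run of `A` from the initial configuration
`delay ∘ I`, with failure pattern `t ↦ F(t+1)` and history `t ↦ H(t+1)`; the shifted history is
in `𝒫_k` because the original one is in `𝒫_{k+1}`, and the shift does not change the correct
processes. Reading a state `s ∈ S⋆` as `delay s`, the interpreted run of `𝔉_DaS(A)` repeats
a configuration exactly at the deleted steps, so it is a finite stutter of the interpreted run
of `A`, and crash time independence and finite stuttering carry `P` over. -/

lemma configAt_succ (I : Proc → State) (Φ : ℕ → Step Proc State Msg) (ℓ : ℕ) (p : Proc) :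
    configAt I Φ (ℓ + 1) p = if (Φ ℓ).proc = p then (Φ ℓ).st' else configAt I Φ ℓ p :=
  rfl

lemma configAt_eq_of_forall_lt_proc_ne {I : Proc → State} {Φ : ℕ → Step Proc State Msg}
    {p : Proc} {n : ℕ} (h : ∀ j < n, (Φ j).proc ≠ p) : configAt I Φ n p = I p := by
  induction n with
  | zero => rfl
  | succ n ih =>
    rw [configAt_succ, if_neg (h n n.lt_succ_self), ih fun j hj => h j (hj.trans n.lt_succ_self)]

lemma exists_prev_step {Φ : ℕ → Step Proc State Msg} {n : ℕ} (hn : ¬ IsFirstStep Φ n) :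
    ∃ j < n, (Φ j).proc = (Φ n).proc ∧ ∀ i, j < i → i < n → (Φ i).proc ≠ (Φ n).proc := by
  obtain ⟨j₀, hj₀, hj₀p⟩ : ∃ j < n, (Φ j).proc = (Φ n).proc := by
    simpa [IsFirstStep] using hn
  set P : ℕ → Prop := fun j => (Φ j).proc = (Φ n).proc
  refine ⟨Nat.findGreatest P (n - 1), by grind [Nat.findGreatest_le],
    Nat.findGreatest_spec (P := P) (by omega) hj₀p,
    fun i hi hin => Nat.findGreatest_is_greatest hi (by omega)⟩

lemma finite_setOf_isFirstStep [Finite Proc] (Φ : ℕ → Step Proc State Msg) :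
    {n | IsFirstStep Φ n}.Finite := by
  refine Set.Finite.of_finite_image (f := fun n => (Φ n).proc) (Set.toFinite _) ?_
  intro a ha b hb hab
  rcases lt_trichotomy a b with h | h | h
  · exact absurd hab (hb a h)
  · exact h
  · exact absurd hab.symm (ha b h)

lemma exists_forall_ge_not_isFirstStep [Finite Proc] (Φ : ℕ → Step Proc State Msg) :
    ∃ N, ∀ n ≥ N, ¬ IsFirstStep Φ n := by
  obtain ⟨N, hN⟩ := (finite_setOf_isFirstStep Φ).bddAbove
  exact ⟨N + 1, fun n hn hfirst => by have := hN hfirst; omega⟩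

noncomputable def nonFirstIdx (Φ : ℕ → Step Proc State Msg) : ℕ → ℕ :=
  Nat.nth fun n => ¬ IsFirstStep Φ n

lemma nonFirstIdx_count {Φ : ℕ → Step Proc State Msg} {n : ℕ} (hn : ¬ IsFirstStep Φ n) :
    nonFirstIdx Φ (Nat.count (fun n => ¬ IsFirstStep Φ n) n) = n :=
  Nat.nth_count hn

lemma exists_nonFirstIdx_eq {Φ : ℕ → Step Proc State Msg} {n : ℕ} (hn : ¬ IsFirstStep Φ n) :
    ∃ ℓ, nonFirstIdx Φ ℓ = n :=
  ⟨_, nonFirstIdx_count hn⟩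

section Finite

variable [Finite Proc] (Φ : ℕ → Step Proc State Msg)

lemma infinite_setOf_not_isFirstStep : {n | ¬ IsFirstStep Φ n}.Infinite :=
  (finite_setOf_isFirstStep Φ).infinite_compl

lemma nonFirstIdx_strictMono : StrictMono (nonFirstIdx Φ) :=
  Nat.nth_strictMono (infinite_setOf_not_isFirstStep Φ)

lemma not_isFirstStep_nonFirstIdx (ℓ : ℕ) : ¬ IsFirstStep Φ (nonFirstIdx Φ ℓ) :=
  Nat.nth_mem_of_infinite (infinite_setOf_not_isFirstStep Φ) ℓ

lemma nonFirstIdx_pos (ℓ : ℕ) : 0 < nonFirstIdx Φ ℓ :=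
  Nat.pos_of_ne_zero fun h =>
    not_isFirstStep_nonFirstIdx Φ ℓ (h ▸ fun j hj => absurd hj (Nat.not_lt_zero j))

end Finite

lemma stutter_comp (w : ℕ → Proc → PState) (N : ℕ) :
    ∀ c : ℕ → ℕ, c 0 = 0 → (∀ m, c (m + 1) = c m ∨ c (m + 1) = c m + 1) →
      (∀ m ≥ N, c (m + 1) = c m + 1) → Stutter w (w ∘ c) := by
  induction N with
  | zero =>
    intro c h0 _ hsucc
    have hc : c = id := funext fun m => by
      induction m with
      | zero => exact h0
      | succ m ih => rw [hsucc m m.zero_le, ih]; rfl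
    subst hc
    exact .refl
  | succ N ih =>
    intro c h0 hstep hsucc
    rcases hstep N with hflat | hN
    · -- `c'` skips the flat step of `c` at `N`; `w ∘ c` re-inserts it as a stutter.
      set c' : ℕ → ℕ := fun m => c (if m ≤ N then m else m + 1)
      have hle : ∀ m ≤ N, c' m = c m := fun m hm => by simp [c', hm]
      have hge : ∀ m ≥ N, c' m = c (m + 1) := fun m hm => by
        rcases hm.eq_or_lt with rfl | hm
        · simp [c', hflat]
        · simp [c', Nat.not_le.mpr hm]
      have hstep' : ∀ m, c' (m + 1) = c' m ∨ c' (m + 1) = c' m + 1 := fun m => by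
        rcases Nat.lt_or_ge m N with hm | hm
        · rw [hle m hm.le, hle (m + 1) hm]; exact hstep m
        · rw [hge m hm, hge (m + 1) (by omega)]; exact hstep (m + 1)
      have hsucc' : ∀ m ≥ N, c' (m + 1) = c' m + 1 := fun m hm => by
        rw [hge m hm, hge (m + 1) (by omega)]; exact hsucc (m + 1) (by omega)
      refine .tail (ih c' (hle 0 N.zero_le ▸ h0) hstep' hsucc') ⟨N, ?_, ?_, ?_⟩
      · intro m hm
        simp only [Function.comp_apply, hle m hm]
      · exact fun p => .inl (by simp only [Function.comp_apply, hflat, hle N le_rfl])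
      · intro m hm
        simp only [Function.comp_apply, hge m hm.le]
    · refine ih c h0 hstep fun m hm => ?_
      rcases hm.eq_or_lt with rfl | hm
      · exact hN
      · exact hsucc m hm

lemma stutter_comp_count (w : ℕ → Proc → PState) {q : ℕ → Prop} [DecidablePred q] {N : ℕ}
    (hq : ∀ m ≥ N, q m) : Stutter w (w ∘ Nat.count q) :=
  stutter_comp w N _ (Nat.count_zero q)
    (fun m => by by_cases h : q m <;> simp [Nat.count_succ, h])
    (fun m hm => by simp [Nat.count_succ, hq m hm])

lemma correctS_shiftPattern (F : FailurePattern Proc) : correctS (shiftPattern F) = correctS F := by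
  ext p
  exact ⟨fun hp t ht => hp t (F.mono t ht), fun hp t => hp (t + 1)⟩

lemma shift_mem_Pk {k : ℕ} {F : FailurePattern Proc} {H : Proc → ℕ → Set Proc}
    (hH : H ∈ Pk (k + 1) F) : (fun p t => H p (t + 1)) ∈ Pk k (shiftPattern F) := by
  obtain ⟨hcompl, hacc⟩ := hH
  refine ⟨fun p q hqk hq hp => ?_, fun p q t hqk hqt => hacc p q (t + 1) hqk hqt⟩
  rw [faultyS, correctS_shiftPattern] at hq
  rw [correctS_shiftPattern] at hp
  obtain ⟨t', ht'⟩ := hcompl p q hqk hq hp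
  exact ⟨t', fun t ht => ht' (t + 1) (by omega)⟩

section ValidRun

variable {A : Algorithm Proc State Msg} {Det : FailurePattern Proc → Set (Proc → ℕ → Set Proc)}
  {F : FailurePattern Proc} {H : Proc → ℕ → Set Proc} {I : Proc → State}
  {Φ : ℕ → Step Proc State Msg} {T : ℕ → ℕ}

lemma ValidRun.init_mem (hR : ValidRun A Det F H I Φ T) (p : Proc) : I p ∈ A.init p :=
  hR.2.2.1 p

lemma ValidRun.mem_allowed (hR : ValidRun A Det F H I Φ T) (ℓ : ℕ) : Φ ℓ ∈ A.allowed :=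
  hR.2.2.2.2.1 ℓ

lemma ValidRun.exists_prev_st_eq (hR : ValidRun A Det F H I Φ T) {n : ℕ}
    (hn : ¬ IsFirstStep Φ n) : ∃ j < n, (Φ j).proc = (Φ n).proc ∧ (Φ n).st = (Φ j).st' := by
  obtain ⟨-, -, -, -, -, -, -, -, -, -, hchain⟩ := hR
  obtain ⟨j, hj, hjp, hbetween⟩ := exists_prev_step hn
  exact ⟨j, hj, hjp, hchain j n hj hjp.symm fun i hi hin => hjp ▸ hbetween i hi hin⟩

lemma ValidRun.shift {k : ℕ} (hR : ValidRun A (Pk (k + 1)) F H I Φ T) (hT0 : 0 < T 0) :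
    ValidRun A (Pk k) (shiftPattern F) (fun p t => H p (t + 1)) I Φ (fun ℓ => T ℓ - 1) := by
  obtain ⟨hT, hH, hI, hinf, hA, hlive, hfd, hspur, hrel, hfirst, hchain⟩ := hR
  have hTpos : ∀ ℓ, 1 ≤ T ℓ := fun ℓ => hT0.trans_le (hT.monotone ℓ.zero_le)
  have hTsub : ∀ ℓ, T ℓ - 1 + 1 = T ℓ := fun ℓ => Nat.sub_add_cancel (hTpos ℓ)
  refine ⟨fun a b hab => Nat.sub_lt_sub_right (hTpos a) (hT hab), shift_mem_Pk hH, hI,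
    by simpa only [correctS_shiftPattern] using hinf, hA, fun ℓ => ?_, fun ℓ => ?_, hspur,
    by simpa only [correctS_shiftPattern] using hrel, hfirst, hchain⟩
  · show _ ∉ F.F (T ℓ - 1 + 1)
    exact hTsub ℓ ▸ hlive ℓ
  · show _ = H _ (T ℓ - 1 + 1)
    exact hTsub ℓ ▸ hfd ℓ

end ValidRun

namespace DaSData

variable {A : Algorithm Proc State Msg} (D : DaSData A)

lemma notMem_Q {p : Proc} {s : State} (hs : s ∈ D.Ss p) : s ∉ A.Q p :=
  Set.disjoint_left.mp (D.disj p) hs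

lemma image_delay (p : Proc) : D.delay p '' D.Ss p = A.init p :=
  (Set.image_subset_iff.mpr (D.delay_maps p)).antisymm (D.delay_surj p)

noncomputable def undelay (p : Proc) (s : State) : State :=
  if s ∈ D.Ss p then D.delay p s else s

lemma undelay_of_mem_Q {p : Proc} {s : State} (hs : s ∈ A.Q p) : D.undelay p s = s :=
  if_neg fun h => D.notMem_Q h hs

lemma undelay_of_mem_Ss {p : Proc} {s : State} (hs : s ∈ D.Ss p) :
    D.undelay p s = D.delay p s :=
  if_pos hs

lemma isInterp_undelay {initP : Set PState} {V : Proc → State → PState}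
    (hV : IsInterp A initP V) : IsInterp (DaSAlg A D) initP fun p s => V p (D.undelay p s) := by
  refine ⟨fun p => Set.eq_univ_of_univ_subset ?_, fun p => ?_⟩
  · rw [← hV.1 p]
    rintro _ ⟨s, hs, rfl⟩
    exact ⟨s, .inl hs, congrArg (V p) (D.undelay_of_mem_Q hs)⟩
  · rw [← hV.2 p, ← D.image_delay p, Set.image_image]
    exact Set.image_congr fun s hs => congrArg (V p) (D.undelay_of_mem_Ss hs)

end DaSData

namespace DaSAlg

variable {A : Algorithm Proc State Msg} {D : DaSData A} {s : Step Proc State Msg}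

lemma mem_allowed : s ∈ (DaSAlg A D).allowed ↔ s ∈ A.allowed ∨
    (s.st ∈ D.Ss s.proc ∧ s.st' = D.delay s.proc s.st ∧ s.recv = none ∧ s.send = none) :=
  Iff.rfl

lemma st'_mem_Q (hs : s ∈ (DaSAlg A D).allowed) : s.st' ∈ A.Q s.proc := by
  rcases mem_allowed.mp hs with hA | ⟨hSs, hst', -, -⟩
  · exact (A.allowed_st s hA).2
  · exact hst' ▸ A.init_sub _ (D.delay_maps _ _ hSs)

lemma mem_allowed_of_st_mem_Q (hs : s ∈ (DaSAlg A D).allowed) (hQ : s.st ∈ A.Q s.proc) :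
    s ∈ A.allowed :=
  (mem_allowed.mp hs).resolve_right fun h => D.notMem_Q h.1 hQ

end DaSAlg

section DaSRun

variable {A : Algorithm Proc State Msg} {D : DaSData A}
  {Det : FailurePattern Proc → Set (Proc → ℕ → Set Proc)}
  {F : FailurePattern Proc} {H : Proc → ℕ → Set Proc} {I : Proc → State}
  {Φ : ℕ → Step Proc State Msg} {T : ℕ → ℕ}

lemma ValidRun.delayStep_of_isFirstStep (hR : ValidRun (DaSAlg A D) Det F H I Φ T) {n : ℕ}
    (hn : IsFirstStep Φ n) :
    (Φ n).st' = D.delay (Φ n).proc (I (Φ n).proc) ∧ (Φ n).recv = none ∧ (Φ n).send = none := by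
  obtain ⟨-, -, hI, -, hA, -, -, -, -, hfirst, -⟩ := hR
  have hst := hfirst n hn
  rcases DaSAlg.mem_allowed.mp (hA n) with hA | ⟨-, hst', hrecv, hsend⟩
  · exact absurd (A.allowed_st _ hA).1 (D.notMem_Q (hst ▸ hI _))
  · exact ⟨hst ▸ hst', hrecv, hsend⟩

lemma ValidRun.mem_allowed_of_not_isFirstStep_s14 (hR : ValidRun (DaSAlg A D) Det F H I Φ T)
    {n : ℕ} (hn : ¬ IsFirstStep Φ n) : Φ n ∈ A.allowed := by
  obtain ⟨j, -, hjp, hst⟩ := hR.exists_prev_st_eq hn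
  exact DaSAlg.mem_allowed_of_st_mem_Q (hR.mem_allowed n)
    (hst ▸ hjp ▸ DaSAlg.st'_mem_Q (hR.mem_allowed j))

lemma ValidRun.dropFirstSteps [Finite Proc] (hR : ValidRun (DaSAlg A D) Det F H I Φ T) :
    ValidRun A Det F H (fun p => D.delay p (I p)) (fun ℓ => Φ (nonFirstIdx Φ ℓ))
      (fun ℓ => T (nonFirstIdx Φ ℓ)) := by
  have he := nonFirstIdx_strictMono Φ
  obtain ⟨hT, hH, hI, hinf, -, hlive, hfd, hspur, hrel, -, hchain⟩ := id hR
  refine ⟨hT.comp he, hH, fun p => D.delay_maps p _ (hI p), ?_,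
    fun ℓ => hR.mem_allowed_of_not_isFirstStep_s14 (not_isFirstStep_nonFirstIdx Φ ℓ),
    fun ℓ => hlive _, fun ℓ => hfd _, ?_, ?_, ?_, ?_⟩
  · intro p hp n
    obtain ⟨m, hm, rfl⟩ := hinf p hp (nonFirstIdx Φ n + 1)
    obtain ⟨m', hm', hm'p⟩ := hinf _ hp (m + 1)
    obtain ⟨ℓ, rfl⟩ := exists_nonFirstIdx_eq fun h => h m (by omega) hm'p.symm
    exact ⟨ℓ, (he.lt_iff_lt.mp (by omega)).le, hm'p⟩
  · intro ℓ q m hr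
    obtain ⟨j, hj, rfl, hjs⟩ := hspur _ q m hr
    obtain ⟨i, rfl⟩ := exists_nonFirstIdx_eq (Φ := Φ) (n := j) fun h => by
      simp [(hR.delayStep_of_isFirstStep h).2.2] at hjs
    exact ⟨i, he.lt_iff_lt.mp hj, rfl, hjs⟩
  · intro ℓ q m hs
    obtain ⟨huniq, hdeliver⟩ := hrel _ q m hs
    refine ⟨fun a b ha hb hap har hbp hbr =>
      he.injective (huniq _ _ (he ha) (he hb) hap har hbp hbr), fun hq => ?_⟩
    obtain ⟨j, hj, rfl, hjr⟩ := hdeliver hq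
    obtain ⟨i, rfl⟩ := exists_nonFirstIdx_eq (Φ := Φ) (n := j) fun h => by
      simp [(hR.delayStep_of_isFirstStep h).2.1] at hjr
    exact ⟨i, he.lt_iff_lt.mp hj, rfl, hjr⟩
  · intro ℓ hℓ
    obtain ⟨j, hj, hjp, hst⟩ := hR.exists_prev_st_eq (not_isFirstStep_nonFirstIdx Φ ℓ)
    have hfirst : IsFirstStep Φ j := by
      by_contra hnf
      obtain ⟨i, rfl⟩ := exists_nonFirstIdx_eq hnf
      exact hℓ i (he.lt_iff_lt.mp hj) hjp
    rw [hst, (hR.delayStep_of_isFirstStep hfirst).1, hjp]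
  · intro ℓ m hlm hp hbetween
    refine hchain _ _ (he hlm) hp fun j hj₁ hj₂ hjp => ?_
    obtain ⟨i, rfl⟩ := exists_nonFirstIdx_eq fun h => h _ hj₁ hjp.symm
    exact hbetween i (he.lt_iff_lt.mp hj₁) (he.lt_iff_lt.mp hj₂) hjp

lemma ValidRun.undelay_configAt (hR : ValidRun (DaSAlg A D) Det F H I Φ T) (m : ℕ) (p : Proc) :
    D.undelay p (configAt I Φ m p) =
      configAt (fun p => D.delay p (I p)) (fun ℓ => Φ (nonFirstIdx Φ ℓ))
        (Nat.count (fun n => ¬ IsFirstStep Φ n) m) p := by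
  have hI := hR.init_mem
  induction m with
  | zero => exact D.undelay_of_mem_Ss (hI p)
  | succ m ih =>
    rw [Nat.count_succ]
    by_cases hm : IsFirstStep Φ m
    · rw [if_neg (not_not.mpr hm), add_zero, configAt_succ, ← ih]
      split_ifs with hp
      · subst hp
        rw [configAt_eq_of_forall_lt_proc_ne hm, (hR.delayStep_of_isFirstStep hm).1,
          D.undelay_of_mem_Q (A.init_sub _ (D.delay_maps _ _ (hI _))),
          D.undelay_of_mem_Ss (hI _)]
      · rfl
    · simp only [if_pos hm, configAt_succ, nonFirstIdx_count hm]
      split_ifs with hp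
      · exact D.undelay_of_mem_Q (hp ▸ DaSAlg.st'_mem_Q (hR.mem_allowed m))
      · exact ih

end DaSRun

theorem das_solves_general {Proc State Msg PState : Type} [Fintype Proc] (k : ℕ)
    (A : Algorithm Proc State Msg) (D : DaSData A)
    (initP : Set PState) (P : TimeFreeProblem Proc PState initP)
    (h : Solves A (Pk k) P.pred initP) :
    Solves (DaSAlg A D) (Pk (k + 1)) P.pred initP := by
  obtain ⟨V, hV, hsolves⟩ := h
  refine ⟨fun p s => V p (D.undelay p s), D.isInterp_undelay hV, fun F H I Φ T hR => ?_⟩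
  set I₀ : Proc → State := fun p => D.delay p (I p)
  set Φ₀ : ℕ → Step Proc State Msg := fun ℓ => Φ (nonFirstIdx Φ ℓ)
  have hT₀ : 0 < T (nonFirstIdx Φ 0) := (nonFirstIdx_pos Φ 0).trans_le hR.1.le_apply
  have hR₀ : ValidRun A (Pk k) (shiftPattern F) (fun p t => H p (t + 1)) I₀ Φ₀
      (fun ℓ => T (nonFirstIdx Φ ℓ) - 1) :=
    hR.dropFirstSteps.shift hT₀
  have hinit : ∀ p, interpRun V I₀ Φ₀ 0 p ∈ initP := fun p => hV.2 p ▸ ⟨_, hR₀.init_mem p, rfl⟩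
  have hP : P.pred (interpRun V I₀ Φ₀) F :=
    (P.crashIndep _ _ F hinit (correctS_shiftPattern F)).mp (hsolves _ _ _ _ _ hR₀)
  have hw : interpRun (fun p s => V p (D.undelay p s)) I Φ =
      interpRun V I₀ Φ₀ ∘ Nat.count (fun n => ¬ IsFirstStep Φ n) :=
    funext fun m => funext fun p => congrArg (V p) (hR.undelay_configAt m p)
  obtain ⟨N, hN⟩ := exists_forall_ge_not_isFirstStep Φ
  rw [hw]
  exact (P.stutterInv _ _ F hinit (stutter_comp_count _ hN)).mp hP

/-- If `A` solves a time-free problem `P` using `𝒫_k`, then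
`Ã = 𝔉_DaS(A)` solves `P` using `𝒫_{k+1}`. -/
theorem das_solves {Proc State Msg PState : Type} [Fintype Proc] [Nonempty Proc] (k : ℕ)
    (A : Algorithm Proc State Msg) (D : DaSData A)
    (initP : Set PState) (P : TimeFreeProblem Proc PState initP)
    (h : Solves A (Pk k) P.pred initP) :
    Solves (DaSAlg A D) (Pk (k + 1)) P.pred initP :=
  das_solves_general k A D initP P h

end FDT
end
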